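/- arXiv:2301.09340 — 5 statements merged into one kernel-verified Lean document; each statement's English description precedes it below -/
import Mathlib

section
/- Let (E, F) be a set system, y a point in P_F, μ ≥ 1, and η = min{c(F) : F ∈ F_y}, where F_y consists of all F ∈ F with χ^F on the minimal face of P_F containing y. Then for any T ∈ F_y satisfying (μ−1)·(c(T) − η) ≤ μ·(c^⊤ y − η), there exists a set U ∈ F_y in the ⌈2ρ(F_y)/μ⌉-neighborhood of T on the minimal face P_{F_y} with c(U) ≤ c^⊤ y, where ρ(F_y) = max{|F| : F ∈ F_y}. -/
/-!
The minimal face of `y` is `conv {χ^F : F ∈ 𝓕_y}`: a face of a polytope is the hull of the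
vertices it contains, and the minimal face is convex, being the set of points `z` for which the
ray from `z` through `y` stays in the polytope a little beyond `y`. In particular `η ≤ cᵀy`; let
`W ∈ 𝓕_y` attain `η`.

From a vertex `χ^V` with `c(V) > cᵀy`, restrict successively to the faces where `U` lies on a
Hamming geodesic from `V` to `W`, where the slope `(c(V) - c(U)) / |V Δ U|` is maximal, and then
take `U` Hamming-nearest to `V`. Each restriction is the face cut out by a functional
`χ ↦ λ ⟨s_V, χ⟩ + ⟨g, χ⟩`, with `s_V` the `±1`-vector of `V`, and the geodesic face between `V`
and a nearest `U` is the edge `[χ^V, χ^U]`. A step thus shortens `|V Δ W|` and gains at least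
`(c(V) - c(W)) / |V Δ W|`, so `|T Δ W| (c(T) - cᵀy) / (c(T) - η) ≤ 2ρ/μ` steps suffice.
-/

open scoped Classical

noncomputable section

/-- Characteristic vector of a finite set. -/
def chiF {E : Type*} [DecidableEq E] (F : Finset E) : E → ℝ :=
  fun e => if e ∈ F then 1 else 0

/-- Combinatorial polytope of a set system: the convex hull of characteristic vectors. -/
def combPolytope {E : Type*} [DecidableEq E] (𝓕 : Set (Finset E)) : Set (E → ℝ) :=
  convexHull ℝ (chiF '' 𝓕)

/-- Two points are adjacent vertices of `P` if they are distinct and the segment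
between them is a face (extreme set) of `P`, i.e. an edge of the polytope. -/
def AdjVerts {E : Type*} (P : Set (E → ℝ)) (v w : E → ℝ) : Prop :=
  v ≠ w ∧ IsExtreme ℝ P (segment ℝ v w)

/-- `w` is reachable from `v` by traversing at most `q` edges of the polytope `P`. -/
def ReachesIn {E : Type*} (P : Set (E → ℝ)) (q : ℕ) (v w : E → ℝ) : Prop :=
  ∃ n ≤ q, ∃ f : ℕ → E → ℝ,
    f 0 = v ∧ f n = w ∧ ∀ i < n, AdjVerts P (f i) (f (i + 1))

/-- The minimal face of `P` containing `y`: the intersection of all faces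
(extreme sets) of `P` containing `y`. -/
def minFace {E : Type*} (P : Set (E → ℝ)) (y : E → ℝ) : Set (E → ℝ) :=
  ⋂₀ {A | IsExtreme ℝ P A ∧ y ∈ A}

/-- The sets of the system whose characteristic vectors lie on the minimal face
of the combinatorial polytope containing `y`. -/
def faceFam {E : Type*} [DecidableEq E] (𝓕 : Set (Finset E)) (y : E → ℝ) :
    Set (Finset E) :=
  {F | F ∈ 𝓕 ∧ chiF F ∈ minFace (combPolytope 𝓕) y}

/-- Cost of a set: sum of the costs of its elements. -/
def cost {E : Type*} (c : E → ℝ) (F : Finset E) : ℝ := ∑ e ∈ F, c e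

/-- Inner product `c^⊤ y`. -/
def dotc {E : Type*} [Fintype E] (c y : E → ℝ) : ℝ := ∑ e, c e * y e

open scoped symmDiff Finset

section ConvexFaces

variable {X : Type*} [AddCommGroup X] [Module ℝ X]

theorem IsExtreme.subset_convexHull_inter {s B : Set X} (h : IsExtreme ℝ (convexHull ℝ s) B) :
    B ⊆ convexHull ℝ (s ∩ B) := by
  let C := {x ∈ convexHull ℝ s | x ∈ B → x ∈ convexHull ℝ (s ∩ B)}
  have hC : Convex ℝ C := by
    rintro x₁ ⟨hx₁, hB₁⟩ x₂ ⟨hx₂, hB₂⟩ a b ha hb hab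
    refine ⟨convex_convexHull ℝ s hx₁ hx₂ ha hb hab, fun hx => ?_⟩
    rcases ha.eq_or_lt with rfl | ha
    · obtain rfl : b = 1 := by linarith
      simp only [zero_smul, one_smul, zero_add] at hx ⊢
      exact hB₂ hx
    rcases hb.eq_or_lt with rfl | hb
    · obtain rfl : a = 1 := by linarith
      simp only [zero_smul, one_smul, add_zero] at hx ⊢
      exact hB₁ hx
    have hseg : a • x₁ + b • x₂ ∈ openSegment ℝ x₁ x₂ := ⟨a, b, ha, hb, hab, rfl⟩
    exact convex_convexHull ℝ _ (hB₁ (h.left_mem_of_mem_openSegment hx₁ hx₂ hx hseg))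
      (hB₂ (h.right_mem_of_mem_openSegment hx₁ hx₂ hx hseg)) ha.le hb.le hab
  have hsC : s ⊆ C := fun x hx =>
    ⟨subset_convexHull ℝ s hx, fun hxB => subset_convexHull ℝ _ ⟨hx, hxB⟩⟩
  exact fun x hx => (convexHull_min hsC hC (h.subset hx)).2 hx

theorem isExtreme_convexHull_sep {s : Set X} {ℓ : X → ℝ} (hℓ : IsLinearMap ℝ ℓ) {M : ℝ}
    (h : ∀ x ∈ s, ℓ x ≤ M) :
    IsExtreme ℝ (convexHull ℝ s) (convexHull ℝ {x ∈ s | ℓ x = M}) := by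
  have hle : ∀ x ∈ convexHull ℝ s, ℓ x ≤ M := convexHull_min h (convex_halfSpace_le hℓ M)
  have hH : IsExtreme ℝ (convexHull ℝ s) {x ∈ convexHull ℝ s | ℓ x = M} := by
    refine ⟨fun x hx => hx.1, ?_⟩
    rintro x₁ hx₁ x₂ hx₂ x ⟨-, hx⟩ ⟨a, b, ha, hb, hab, rfl⟩
    rw [hℓ.map_add, hℓ.map_smul, hℓ.map_smul, smul_eq_mul, smul_eq_mul] at hx
    obtain rfl : a = 1 - b := by linarith
    refine ⟨hx₁, le_antisymm (hle x₁ hx₁) (le_of_mul_le_mul_left ?_ ha)⟩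
    linarith [mul_le_mul_of_nonneg_left (hle x₂ hx₂) hb.le]
  have hhull : convexHull ℝ {x ∈ s | ℓ x = M} = {x ∈ convexHull ℝ s | ℓ x = M} := by
    refine subset_antisymm (convexHull_min (fun x hx => ⟨subset_convexHull ℝ s hx.1, hx.2⟩)
      ((convex_convexHull ℝ s).inter (convex_hyperplane hℓ M))) ?_
    refine hH.subset_convexHull_inter.trans (convexHull_mono ?_)
    rintro x ⟨hxs, -, hx⟩
    exact ⟨hxs, hx⟩
  rw [hhull]
  exact hH

theorem isExtreme_setOf_add_smul_sub_mem {P : Set X} (hP : Convex ℝ P) (y : X) :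
    IsExtreme ℝ P {z ∈ P | ∃ t : ℝ, 0 < t ∧ y + t • (y - z) ∈ P} := by
  refine ⟨fun z hz => hz.1, ?_⟩
  rintro x₁ hx₁ x₂ hx₂ x ⟨-, t, ht, hp⟩ ⟨a, b, ha, hb, hab, rfl⟩
  obtain rfl : a = 1 - b := by linarith
  have hq : 1 + t * b ≠ 0 := by positivity
  -- `y + s (y - x₁)` is the point of `[y + t (y - x), x₂]` with weights `1 : t b`.
  refine ⟨hx₁, t * (1 - b) / (1 + t * b), by positivity, ?_⟩
  convert hP hp hx₂ (by positivity : (0 : ℝ) ≤ 1 / (1 + t * b))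
    (by positivity : (0 : ℝ) ≤ t * b / (1 + t * b)) (by field_simp) using 1
  match_scalars <;> field_simp <;> ring

theorem convex_setOf_add_smul_sub_mem {P : Set X} (hP : Convex ℝ P) {y : X} (hy : y ∈ P) :
    Convex ℝ {z ∈ P | ∃ t : ℝ, 0 < t ∧ y + t • (y - z) ∈ P} := by
  have shrink : ∀ {z : X} {t s : ℝ}, y + t • (y - z) ∈ P → 0 < t → 0 ≤ s → s ≤ t →
      y + s • (y - z) ∈ P := by
    intro z t s hp ht hs hst
    convert hP.add_smul_sub_mem hy hp ⟨div_nonneg hs ht.le, (div_le_one ht).2 hst⟩ using 2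
    rw [add_sub_cancel_left, smul_smul, div_mul_cancel₀ _ ht.ne']
  rintro z₁ ⟨hz₁, t₁, ht₁, hp₁⟩ z₂ ⟨hz₂, t₂, ht₂, hp₂⟩ a b ha hb hab
  have ht : 0 < min t₁ t₂ := lt_min ht₁ ht₂
  refine ⟨hP hz₁ hz₂ ha hb hab, min t₁ t₂, ht, ?_⟩
  convert hP (shrink hp₁ ht₁ ht.le (min_le_left _ _)) (shrink hp₂ ht₂ ht.le (min_le_right _ _))
    ha hb hab using 1
  obtain rfl : a = 1 - b := by linarith
  module

end ConvexFaces

section MinimalFace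

variable {E : Type*} {P : Set (E → ℝ)} {y : E → ℝ}

theorem mem_minFace_self : y ∈ minFace P y :=
  Set.mem_sInter.2 fun _ hA => hA.2

theorem isExtreme_minFace (hy : y ∈ P) : IsExtreme ℝ P (minFace P y) :=
  isExtreme_sInter ⟨P, IsExtreme.rfl, hy⟩ fun _ hA => hA.1

theorem minFace_eq_setOf_add_smul_sub_mem (hP : Convex ℝ P) (hy : y ∈ P) :
    minFace P y = {z ∈ P | ∃ t : ℝ, 0 < t ∧ y + t • (y - z) ∈ P} := by
  refine subset_antisymm (Set.sInter_subset_of_mem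
    ⟨isExtreme_setOf_add_smul_sub_mem hP y, hy, 1, one_pos, by simpa using hy⟩) ?_
  rintro z ⟨hz, t, ht, hp⟩
  have hq : 1 + t ≠ 0 := by positivity
  refine Set.mem_sInter.2 fun A ⟨hA, hyA⟩ => hA.left_mem_of_mem_openSegment hz hp hyA
    ⟨t / (1 + t), 1 / (1 + t), by positivity, by positivity, by field_simp; ring, ?_⟩
  match_scalars
  · field_simp
    ring
  · field_simp

theorem convex_minFace (hP : Convex ℝ P) (hy : y ∈ P) : Convex ℝ (minFace P y) := by
  rw [minFace_eq_setOf_add_smul_sub_mem hP hy]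
  exact convex_setOf_add_smul_sub_mem hP hy

theorem reachesIn_refl (P : Set (E → ℝ)) (q : ℕ) (v : E → ℝ) : ReachesIn P q v v :=
  ⟨0, q.zero_le, fun _ => v, rfl, rfl, fun _ h => absurd h (Nat.not_lt_zero _)⟩

theorem ReachesIn.cons {q : ℕ} {v u w : E → ℝ} (hvu : AdjVerts P v u)
    (h : ReachesIn P q u w) : ReachesIn P (q + 1) v w := by
  obtain ⟨n, hn, f, rfl, rfl, hf⟩ := h
  refine ⟨n + 1, by omega, fun i => match i with | 0 => v | i + 1 => f i, rfl, rfl, ?_⟩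
  rintro (_ | i) hi
  · exact hvu
  · exact hf i (by omega)

end MinimalFace

section SetSystem

variable {E : Type*}

theorem cost_add (f g : E → ℝ) (u : Finset E) : cost (f + g) u = cost f u + cost g u :=
  Finset.sum_add_distrib

theorem cost_sub (f g : E → ℝ) (u : Finset E) : cost (f - g) u = cost f u - cost g u :=
  Finset.sum_sub_distrib _ _

theorem cost_smul (a : ℝ) (f : E → ℝ) (u : Finset E) : cost (a • f) u = a * cost f u :=
  (Finset.mul_sum _ _ _).symm

theorem isLinearMap_dotc [Fintype E] (g : E → ℝ) : IsLinearMap ℝ (dotc g) where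
  map_add x y := by simp only [dotc, Pi.add_apply, mul_add, Finset.sum_add_distrib]
  map_smul a x := by
    simp only [dotc, Pi.smul_apply, smul_eq_mul, Finset.mul_sum]
    exact Finset.sum_congr rfl fun _ _ => by ring

variable [DecidableEq E]

def signVec (v : Finset E) : E → ℝ := fun e => if e ∈ v then 1 else -1

theorem chiF_injective : Function.Injective (chiF (E := E)) := by
  intro F G h
  ext e
  simpa [chiF] using congrArg (· = 1) (congrFun h e)

theorem cost_signVec (v u : Finset E) : cost (signVec v) u = #v - #(v ∆ u) := by
  have hsymm : #(v ∆ u) + 2 * #(u ∩ v) = #v + #u := by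
    rw [symmDiff_def, Finset.sup_eq_union, Finset.card_union_of_disjoint disjoint_sdiff_sdiff]
    grind
  have hsplit := Finset.card_inter_add_card_sdiff u v
  simp only [cost, signVec, Finset.sum_ite, Finset.sum_const, Finset.filter_mem_eq_inter,
    Finset.filter_notMem_eq_sdiff, nsmul_eq_mul]
  have h1 : ((#(v ∆ u) + 2 * #(u ∩ v) : ℕ) : ℝ) = #v + #u := by exact_mod_cast hsymm
  have h2 : ((#(u ∩ v) + #(u \ v) : ℕ) : ℝ) = #u := by exact_mod_cast hsplit
  push_cast at h1 h2
  linarith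

theorem card_symmDiff_triangle (u v w : Finset E) : #(u ∆ w) ≤ #(u ∆ v) + #(v ∆ w) :=
  (Finset.card_le_card (symmDiff_triangle u v w)).trans (Finset.card_union_le _ _)

theorem card_symmDiff_le_add (u v : Finset E) : #(u ∆ v) ≤ #u + #v :=
  (Finset.card_le_card symmDiff_le_sup).trans (Finset.card_union_le _ _)

theorem card_symmDiff_pos {u v : Finset E} (h : u ≠ v) : 0 < #(u ∆ v) :=
  Finset.card_pos.2 (Finset.symmDiff_nonempty.2 h)

theorem minFace_combPolytope {𝓕 : Set (Finset E)} {y : E → ℝ} (hy : y ∈ combPolytope 𝓕) :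
    minFace (combPolytope 𝓕) y = convexHull ℝ (chiF '' faceFam 𝓕 y) := by
  have himage : chiF '' faceFam 𝓕 y = chiF '' 𝓕 ∩ minFace (combPolytope 𝓕) y :=
    Set.image_inter_preimage chiF 𝓕 (minFace (combPolytope 𝓕) y)
  refine subset_antisymm ?_ (convexHull_min ?_ (convex_minFace (convex_convexHull ℝ _) hy))
  · rw [himage]
    exact (isExtreme_minFace hy).subset_convexHull_inter
  · rw [himage]
    exact Set.inter_subset_right

variable [Fintype E]

theorem dotc_chiF (g : E → ℝ) (F : Finset E) : dotc g (chiF F) = cost g F := by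
  simp [dotc, chiF, cost]

theorem isExtreme_convexHull_image_chiF_sep (S : Set (Finset E)) (g : E → ℝ) {M : ℝ}
    (h : ∀ u ∈ S, cost g u ≤ M) :
    IsExtreme ℝ (convexHull ℝ (chiF '' S)) (convexHull ℝ (chiF '' {u ∈ S | cost g u = M})) := by
  have himage : chiF '' {u ∈ S | cost g u = M} = {x ∈ chiF '' S | dotc g x = M} := by
    ext x
    constructor
    · rintro ⟨u, ⟨hu, hM⟩, rfl⟩
      exact ⟨⟨u, hu, rfl⟩, (dotc_chiF g u).trans hM⟩
    · rintro ⟨⟨u, hu, rfl⟩, hM⟩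
      exact ⟨u, ⟨hu, (dotc_chiF g u).symm.trans hM⟩, rfl⟩
  rw [himage]
  refine isExtreme_convexHull_sep (isLinearMap_dotc g) ?_
  rintro _ ⟨u, hu, rfl⟩
  rw [dotc_chiF]
  exact h u hu

theorem isExtreme_convexHull_image_chiF_geodesic (S : Set (Finset E)) (v a : Finset E) :
    IsExtreme ℝ (convexHull ℝ (chiF '' S))
      (convexHull ℝ (chiF '' {u ∈ S | #(v ∆ u) + #(u ∆ a) = #(v ∆ a)})) := by
  have key : ∀ u, cost (signVec v + signVec a) u = #v + #a - ((#(v ∆ u) + #(u ∆ a) : ℕ) : ℝ) := by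
    intro u
    rw [cost_add, cost_signVec, cost_signVec, symmDiff_comm a u]
    push_cast
    ring
  have hset : {u ∈ S | #(v ∆ u) + #(u ∆ a) = #(v ∆ a)} =
      {u ∈ S | cost (signVec v + signVec a) u = #v + #a - #(v ∆ a)} := by
    simp only [key, sub_right_inj, Nat.cast_inj]
  rw [hset]
  refine isExtreme_convexHull_image_chiF_sep S _ fun u _ => ?_
  rw [key, sub_le_sub_iff_left, Nat.cast_le]
  exact card_symmDiff_triangle v u a

theorem isExtreme_convexHull_image_chiF_slope (S : Set (Finset E)) (v : Finset E) (g : E → ℝ)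
    {m : ℝ} (h : ∀ u ∈ S, cost g v - cost g u ≤ m * #(v ∆ u)) :
    IsExtreme ℝ (convexHull ℝ (chiF '' S))
      (convexHull ℝ (chiF '' {u ∈ S | cost g v - cost g u = m * #(v ∆ u)})) := by
  have key : ∀ u, cost (m • signVec v - g) u =
      m * #v - cost g v - (m * #(v ∆ u) - (cost g v - cost g u)) := by
    intro u
    rw [cost_sub, cost_smul, cost_signVec]
    ring
  have hset : {u ∈ S | cost g v - cost g u = m * #(v ∆ u)} =
      {u ∈ S | cost (m • signVec v - g) u = m * #v - cost g v} := by
    ext u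
    exact and_congr_right fun _ => by rw [key]; constructor <;> intro h <;> linarith
  rw [hset]
  refine isExtreme_convexHull_image_chiF_sep S _ fun u hu => ?_
  rw [key]
  linarith [h u hu]

/-- The geodesic face between `v` and a nearest `a` contains no third set. -/
theorem isExtreme_segment_chiF_of_nearest {S : Set (Finset E)} {v a : Finset E} (hv : v ∈ S)
    (ha : a ∈ S) (hnear : ∀ u ∈ S, u ≠ v → #(v ∆ a) ≤ #(v ∆ u)) :
    IsExtreme ℝ (convexHull ℝ (chiF '' S)) (segment ℝ (chiF v) (chiF a)) := by
  have hset : {u ∈ S | #(v ∆ u) + #(u ∆ a) = #(v ∆ a)} = {v, a} := by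
    ext u
    simp only [Set.mem_ofPred_eq, Set.mem_insert_iff, Set.mem_singleton_iff]
    constructor
    · rintro ⟨hu, hgeo⟩
      by_contra! huva
      have := card_symmDiff_pos huva.2
      have := hnear u hu huva.1
      omega
    · rintro (rfl | rfl) <;> simp [*]
  simpa only [hset, Set.image_pair, convexHull_pair] using
    isExtreme_convexHull_image_chiF_geodesic S v a

theorem exists_max_slope (S : Set (Finset E)) {v w : Finset E} (hw : w ∈ S) (hwv : w ≠ v)
    (f : Finset E → ℝ) :
    ∃ m : ℝ, (∀ u ∈ S, f v - f u ≤ m * #(v ∆ u)) ∧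
      ∃ u ∈ S, u ≠ v ∧ f v - f u = m * #(v ∆ u) := by
  have hpos : ∀ {u}, u ≠ v → (0 : ℝ) < #(v ∆ u) := fun h =>
    Nat.cast_pos.2 (card_symmDiff_pos h.symm)
  obtain ⟨u₀, ⟨hu₀, hu₀v⟩, hmax⟩ := Set.exists_max_image (S \ {v})
    (fun u => (f v - f u) / #(v ∆ u)) (Set.toFinite _) ⟨w, hw, hwv⟩
  refine ⟨(f v - f u₀) / #(v ∆ u₀), fun u hu => ?_, u₀, hu₀, hu₀v,
    (div_mul_cancel₀ _ (hpos hu₀v).ne').symm⟩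
  rcases eq_or_ne u v with rfl | huv
  · simp
  · exact (div_le_iff₀ (hpos huv)).1 (hmax u ⟨hu, huv⟩)

theorem le_dotc_of_forall_faceFam {𝓕 : Set (Finset E)} {y : E → ℝ} (hy : y ∈ combPolytope 𝓕)
    {c : E → ℝ} {η : ℝ} (h : ∀ F ∈ faceFam 𝓕 y, η ≤ cost c F) : η ≤ dotc c y := by
  have hy' : y ∈ convexHull ℝ (chiF '' faceFam 𝓕 y) := minFace_combPolytope hy ▸ mem_minFace_self
  refine convexHull_min ?_ (convex_halfSpace_ge (isLinearMap_dotc c) η) hy'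
  rintro _ ⟨F, hF, rfl⟩
  show η ≤ dotc c (chiF F)
  rw [dotc_chiF]
  exact h F hF

end SetSystem

/-- `d, d'`: Hamming distances to the target before and after a step lowering the cost from `x` to
`z`; `b ≤ γ`: the target's cost. -/
theorem budget_after_step {d d' k x z b γ : ℝ} (hd : d' + 1 ≤ d) (hd' : 0 ≤ d') (hγz : γ < z)
    (hbγ : b ≤ γ) (hgain : x - b ≤ (x - z) * d) (hbudget : d * (x - γ) ≤ (k + 1) * (x - b)) :
    d' * (z - γ) ≤ k * (z - b) := by
  rcases le_total d' k with hk | hk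
  · linarith [mul_le_mul_of_nonneg_left (by linarith : z - γ ≤ z - b) hd',
      mul_le_mul_of_nonneg_right hk (by linarith : (0 : ℝ) ≤ z - b)]
  · have key : d * (k * (z - b) - (d - 1) * (z - γ)) =
        (d - 1) * ((k + 1) * (x - b) - d * (x - γ)) + (d - (k + 1)) * ((x - z) * d - (x - b)) := by
      ring
    have hnonneg : 0 ≤ d * (k * (z - b) - (d - 1) * (z - γ)) := by
      rw [key]
      exact add_nonneg (mul_nonneg (by linarith) (by linarith))
        (mul_nonneg (by linarith) (by linarith))
    linarith [(mul_nonneg_iff_of_pos_left (by linarith : 0 < d)).1 hnonneg,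
      mul_le_mul_of_nonneg_right (by linarith : d' ≤ d - 1) (by linarith : (0 : ℝ) ≤ z - γ)]

section Walk

variable {E : Type*} [Fintype E] [DecidableEq E] {𝓕 : Set (Finset E)} {y : E → ℝ} {c : E → ℝ}

theorem exists_adjVerts_step (hy : y ∈ combPolytope 𝓕) {v w : Finset E} (hv : v ∈ faceFam 𝓕 y)
    (hw : w ∈ faceFam 𝓕 y) (hcost : cost c w < cost c v) :
    ∃ u ∈ faceFam 𝓕 y, AdjVerts (minFace (combPolytope 𝓕) y) (chiF v) (chiF u) ∧
      #(u ∆ w) < #(v ∆ w) ∧ cost c v - cost c w ≤ (cost c v - cost c u) * #(v ∆ w) := by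
  have hwv : w ≠ v := by rintro rfl; exact lt_irrefl _ hcost
  set S₁ := {u ∈ faceFam 𝓕 y | #(v ∆ u) + #(u ∆ w) = #(v ∆ w)}
  have hwS₁ : w ∈ S₁ := ⟨hw, by simp⟩
  obtain ⟨m, hm, u₀, hu₀, hu₀v, hu₀m⟩ := exists_max_slope S₁ hwS₁ hwv (cost c)
  set S₂ := {u ∈ S₁ | cost c v - cost c u = m * #(v ∆ u)}
  obtain ⟨a, ⟨ha, hav⟩, hnear⟩ := Set.exists_min_image (S₂ \ {v}) (fun u => #(v ∆ u))
    (Set.toFinite _) ⟨u₀, ⟨hu₀, hu₀m⟩, hu₀v⟩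
  have hedge : IsExtreme ℝ (minFace (combPolytope 𝓕) y) (segment ℝ (chiF v) (chiF a)) := by
    rw [minFace_combPolytope hy]
    exact (isExtreme_convexHull_image_chiF_geodesic _ v w).trans
      ((isExtreme_convexHull_image_chiF_slope S₁ v c hm).trans
        (isExtreme_segment_chiF_of_nearest ⟨⟨hv, by simp⟩, by simp⟩ ha
          fun u hu huv => hnear u ⟨hu, huv⟩))
  obtain ⟨⟨haF, hgeo⟩, ham⟩ := ha
  have hva : 0 < #(v ∆ a) := card_symmDiff_pos (Ne.symm hav)
  refine ⟨a, haF, ⟨fun h => hav (chiF_injective h).symm, hedge⟩, by omega, ?_⟩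
  have hmw := hm w hwS₁
  have hva' : (1 : ℝ) ≤ #(v ∆ a) := by exact_mod_cast hva
  rw [ham]
  nlinarith [mul_nonneg (sub_nonneg.2 hva') (by linarith : (0 : ℝ) ≤ m * #(v ∆ w))]

theorem exists_reachesIn_cost_le (hy : y ∈ combPolytope 𝓕) {w : Finset E}
    (hw : w ∈ faceFam 𝓕 y) {γ : ℝ} (hwγ : cost c w ≤ γ) (k : ℕ) {v : Finset E}
    (hv : v ∈ faceFam 𝓕 y) (hbudget : #(v ∆ w) * (cost c v - γ) ≤ k * (cost c v - cost c w)) :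
    ∃ u ∈ faceFam 𝓕 y, ReachesIn (minFace (combPolytope 𝓕) y) k (chiF v) (chiF u) ∧
      cost c u ≤ γ := by
  induction k generalizing v with
  | zero =>
    refine ⟨v, hv, reachesIn_refl _ _ _, ?_⟩
    by_contra! hvγ
    have hvw : v ≠ w := by rintro rfl; linarith
    have : (1 : ℝ) ≤ #(v ∆ w) := by exact_mod_cast card_symmDiff_pos hvw
    push_cast at hbudget
    nlinarith
  | succ k ih =>
    rcases le_or_gt (cost c v) γ with hvγ | hvγ
    · exact ⟨v, hv, reachesIn_refl _ _ _, hvγ⟩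
    obtain ⟨u, hu, hadj, hdist, hgain⟩ := exists_adjVerts_step hy hv hw (hwγ.trans_lt hvγ)
    rcases le_or_gt (cost c u) γ with huγ | huγ
    · exact ⟨u, hu, (reachesIn_refl _ k _).cons hadj, huγ⟩
    have hdist' : (#(u ∆ w) : ℝ) + 1 ≤ #(v ∆ w) := by exact_mod_cast hdist
    obtain ⟨U, hU, hreach, hUγ⟩ := ih hu <|
      budget_after_step hdist' (Nat.cast_nonneg _) huγ hwγ hgain (by exact_mod_cast hbudget)
    exact ⟨U, hU, hreach.cons hadj, hUγ⟩

end Walk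

theorem stmt3_general {E : Type*} [Fintype E] [DecidableEq E]
    (𝓕 : Set (Finset E)) (c : E → ℝ)
    (y : E → ℝ) (hy : y ∈ combPolytope 𝓕)
    (μ : ℝ) (hμ : 1 ≤ μ)
    (η : ℝ) (hηlb : ∀ F ∈ faceFam 𝓕 y, η ≤ cost c F)
    (hηmem : ∃ F ∈ faceFam 𝓕 y, cost c F = η)
    (ρ : ℕ) (hρub : ∀ F ∈ faceFam 𝓕 y, F.card ≤ ρ)
    (T : Finset E) (hT : T ∈ faceFam 𝓕 y)
    (hTcost : (μ - 1) * (cost c T - η) ≤ μ * (dotc c y - η)) :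
    ∃ U ∈ faceFam 𝓕 y,
      ReachesIn (minFace (combPolytope 𝓕) y) ⌈(2 * (ρ : ℝ)) / μ⌉₊ (chiF T) (chiF U) ∧
      cost c U ≤ dotc c y := by
  obtain ⟨W, hW, hWη⟩ := hηmem
  rcases le_or_gt (cost c T) (dotc c y) with hTy | hTy
  · exact ⟨T, hT, reachesIn_refl _ _ _, hTy⟩
  have hdist : (#(T ∆ W) : ℝ) ≤ 2 * ρ := by
    rw [two_mul]
    exact_mod_cast (card_symmDiff_le_add T W).trans (add_le_add (hρub T hT) (hρub W hW))
  have hgap : μ * (cost c T - dotc c y) ≤ cost c T - η := by linarith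
  refine exists_reachesIn_cost_le hy hW (hWη.trans_le (le_dotc_of_forall_faceFam hy hηlb)) _ hT ?_
  calc (#(T ∆ W) : ℝ) * (cost c T - dotc c y)
      ≤ 2 * ρ * (cost c T - dotc c y) := by gcongr
    _ = 2 * ρ / μ * (μ * (cost c T - dotc c y)) := by field_simp
    _ ≤ 2 * ρ / μ * (cost c T - η) := by gcongr
    _ ≤ ⌈2 * (ρ : ℝ) / μ⌉₊ * (cost c T - cost c W) := by
      rw [hWη]
      gcongr
      · exact (mul_nonneg (by linarith) (sub_nonneg.2 hTy.le)).trans hgap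
      · exact Nat.le_ceil _

theorem stmt3 {E : Type*} [Fintype E] [DecidableEq E]
    (𝓕 : Set (Finset E)) (c : E → ℝ)
    (y : E → ℝ) (hy : y ∈ combPolytope 𝓕)
    (μ : ℝ) (hμ : 1 ≤ μ)
    (η : ℝ) (hηlb : ∀ F ∈ faceFam 𝓕 y, η ≤ cost c F)
    (hηmem : ∃ F ∈ faceFam 𝓕 y, cost c F = η)
    (ρ : ℕ) (hρub : ∀ F ∈ faceFam 𝓕 y, F.card ≤ ρ)
    (hρmem : ∃ F ∈ faceFam 𝓕 y, F.card = ρ)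
    (T : Finset E) (hT : T ∈ faceFam 𝓕 y)
    (hTcost : (μ - 1) * (cost c T - η) ≤ μ * (dotc c y - η)) :
    ∃ U ∈ faceFam 𝓕 y,
      ReachesIn (minFace (combPolytope 𝓕) y) ⌈(2 * (ρ : ℝ)) / μ⌉₊ (chiF T) (chiF U) ∧
      cost c U ≤ dotc c y :=
  stmt3_general 𝓕 c y hy μ hμ η hηlb hηmem ρ hρub T hT hTcost
end
end

section
/- Let G = (V, E) be a connected graph, y a point in the spanning tree polytope of G, c ∈ ℝ^E, and let T be a random spanning tree with Pr[e ∈ T] = y(e) for all e ∈ E. Let T̄ be a spanning tree minimizing c(U) among all spanning trees U with |U △ T| ≤ 2 and y(e) ∈ (0,1) for all e ∈ U △ T. Then Pr[c(T̄) ≤ c^⊤ y] ≥ 1/(|V| − 1). -/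
open scoped Classical

noncomputable section

variable {V : Type*}

/-- An edge crosses the cut `S` if it has exactly one endpoint in `S`. -/
def crossing [DecidableEq V] (S : Finset V) (e : Sym2 V) : Prop :=
  ∃ u v, e = s(u, v) ∧ u ∈ S ∧ v ∉ S

/-- The edges of `T` crossing the cut `S`. -/
def cutEdges [DecidableEq V] (S : Finset V) (T : Finset (Sym2 V)) :
    Finset (Sym2 V) :=
  T.filter (crossing S)

/-- Characteristic vector of an edge set. -/
def chiE (T : Finset (Sym2 V)) : Sym2 V → ℝ := fun e => if e ∈ T then 1 else 0

/-- `T` is (the edge set of) a spanning tree of `G`: its edges are edges of `G`,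
it is connected as a spanning subgraph, and it has `|V| - 1` edges. -/
def IsSpanningTree [Fintype V] (G : SimpleGraph V) (T : Finset (Sym2 V)) : Prop :=
  ↑T ⊆ G.edgeSet ∧ (SimpleGraph.fromEdgeSet (↑T : Set (Sym2 V))).Connected ∧
    T.card = Fintype.card V - 1

/-- The spanning tree polytope of `G`: the convex hull of the characteristic
vectors of the spanning trees of `G`. -/
def stPolytope [Fintype V] (G : SimpleGraph V) : Set (Sym2 V → ℝ) :=
  convexHull ℝ {x | ∃ T, IsSpanningTree G T ∧ x = chiE T}

/-- Cost of an edge set. -/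
def costE (c : Sym2 V → ℝ) (T : Finset (Sym2 V)) : ℝ := ∑ e ∈ T, c e

/-- Inner product `c^⊤ y` over all potential edges. -/
def dotE [Fintype V] [DecidableEq V] (c y : Sym2 V → ℝ) : ℝ := ∑ e, c e * y e

/-- Probability of an event under a finitely supported distribution on edge sets. -/
def prob {α : Type*} [Fintype α] (p : PMF (Finset α)) (ev : Finset α → Prop) : ℝ :=
  ∑ T ∈ Finset.univ.filter ev, (p T).toReal


section Aux

open SimpleGraph

private lemma sym2_decomp (e : Sym2 V) : ∃ a b, e = s(a, b) := by
  induction e using Sym2.ind with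
  | _ a b => exact ⟨a, b, rfl⟩

private lemma reach_dichotomy [DecidableEq V] {A : Finset (Sym2 V)} {a b : V}
    (hpre : (fromEdgeSet (↑A : Set (Sym2 V))).Preconnected) (w : V) :
    (fromEdgeSet (↑(A.erase s(a, b)) : Set (Sym2 V))).Reachable w a ∨
      (fromEdgeSet (↑(A.erase s(a, b)) : Set (Sym2 V))).Reachable w b := by
  obtain ⟨p⟩ := hpre w a
  set H' := fromEdgeSet (↑(A.erase s(a, b)) : Set (Sym2 V)) with hH'
  suffices h : ∀ {u v : V} (_ : (fromEdgeSet (↑A : Set (Sym2 V))).Walk u v),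
      (H'.Reachable v a ∨ H'.Reachable v b) → (H'.Reachable u a ∨ H'.Reachable u b) by
    exact h p (Or.inl (Reachable.refl a))
  intro u v q
  induction q with
  | nil => exact id
  | @cons u u' v h q ih =>
    intro hv
    have hm := ih hv
    by_cases hc : s(u, u') = s(a, b)
    · rw [Sym2.eq_iff] at hc
      rcases hc with ⟨rfl, rfl⟩ | ⟨rfl, rfl⟩
      · exact Or.inl (Reachable.refl _)
      · exact Or.inr (Reachable.refl _)
    · have hadj : H'.Adj u u' := by
        rw [hH', fromEdgeSet_adj]
        refine ⟨?_, h.ne⟩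
        have := ((fromEdgeSet_adj _).1 h).1
        simpa [Finset.mem_erase, hc] using this
      rcases hm with hma | hmb
      · exact Or.inl (hadj.reachable.trans hma)
      · exact Or.inr (hadj.reachable.trans hmb)

private lemma connected_erase_of_cycle [DecidableEq V] {A : Finset (Sym2 V)}
    (hconn : (fromEdgeSet (↑A : Set (Sym2 V))).Connected) {u : V}
    (cyc : (fromEdgeSet (↑A : Set (Sym2 V))).Walk u u) (hcyc : cyc.IsCycle) :
    ∃ e ∈ A, (fromEdgeSet (↑(A.erase e) : Set (Sym2 V))).Connected := by
  cases cyc with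
  | nil => exact absurd rfl hcyc.ne_nil
  | @cons _ v _ h q =>
    have hmem : s(u, v) ∈ (SimpleGraph.Walk.cons h q).edges := by simp
    have hreach : ((fromEdgeSet (↑A : Set (Sym2 V))) \ fromEdgeSet {s(u, v)}).Reachable u v :=
      (adj_and_reachable_delete_edges_iff_exists_cycle.2 ⟨u, _, hcyc, hmem⟩).2
    have heA : s(u, v) ∈ A := by
      have := ((fromEdgeSet_adj _).1 h).1
      simpa using this
    refine ⟨s(u, v), heA, ?_⟩
    have hgr : fromEdgeSet (↑(A.erase s(u, v)) : Set (Sym2 V)) =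
        (fromEdgeSet (↑A : Set (Sym2 V))) \ fromEdgeSet {s(u, v)} := by
      ext x y
      simp only [fromEdgeSet_adj, Finset.coe_erase, Set.mem_diff, sdiff_adj,
        Set.mem_singleton_iff, Finset.mem_coe, Finset.mem_erase]
      tauto
    have hreach' : (fromEdgeSet (↑(A.erase s(u, v)) : Set (Sym2 V))).Reachable u v := by
      rw [hgr]; exact hreach
    rw [connected_iff]
    refine ⟨?_, hconn.nonempty⟩
    intro w1 w2
    have key : ∀ w, (fromEdgeSet (↑(A.erase s(u, v)) : Set (Sym2 V))).Reachable w u := by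
      intro w
      rcases reach_dichotomy (a := u) (b := v) hconn.preconnected w with hw | hw
      · exact hw
      · exact hw.trans hreach'.symm
    exact (key w1).trans (key w2).symm

private lemma card_bound [Fintype V] [DecidableEq V] :
    ∀ (k : ℕ) (A : Finset (Sym2 V)), (fromEdgeSet (↑A : Set (Sym2 V))).Connected →
      A.card = k → Fintype.card V ≤ k + 1 := by
  intro k
  induction k using Nat.strong_induction_on with
  | _ k ih =>
    intro A hconn hcard
    by_cases hac : (fromEdgeSet (↑A : Set (Sym2 V))).IsAcyclic
    · have htree : (fromEdgeSet (↑A : Set (Sym2 V))).IsTree := ⟨hconn, hac⟩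
      have hfin : ((fromEdgeSet (↑A : Set (Sym2 V))).edgeSet).Finite := by
        apply Set.Finite.subset A.finite_toSet
        rw [edgeSet_fromEdgeSet]; exact Set.diff_subset
      letI := hfin.fintype
      have h1 := htree.card_edgeFinset
      have h2 : (fromEdgeSet (↑A : Set (Sym2 V))).edgeFinset.card ≤ A.card := by
        apply Finset.card_le_card
        intro g hg
        rw [mem_edgeFinset, edgeSet_fromEdgeSet] at hg
        exact hg.1
      omega
    · rw [IsAcyclic] at hac
      push_neg at hac
      obtain ⟨v, cyc, hc⟩ := hac
      obtain ⟨e, heA, hconn'⟩ := connected_erase_of_cycle hconn cyc hc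
      have hk1 : 1 ≤ k := by
        rw [← hcard]; exact Finset.card_pos.2 ⟨e, heA⟩
      have := ih (k - 1) (by omega) (A.erase e) hconn'
        (by rw [Finset.card_erase_of_mem heA, hcard])
      omega

private lemma isTree_of_card [Fintype V] [DecidableEq V] {A : Finset (Sym2 V)}
    (hconn : (fromEdgeSet (↑A : Set (Sym2 V))).Connected)
    (hcard : A.card = Fintype.card V - 1) :
    (fromEdgeSet (↑A : Set (Sym2 V))).IsTree := by
  refine ⟨hconn, ?_⟩
  intro v cyc hcyc
  obtain ⟨e, heA, hconn'⟩ := connected_erase_of_cycle hconn cyc hcyc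
  have hb := card_bound _ (A.erase e) hconn' rfl
  have hn : 1 ≤ Fintype.card V := Fintype.card_pos_iff.2 hconn.nonempty
  have hA1 : 1 ≤ A.card := Finset.card_pos.2 ⟨e, heA⟩
  rw [Finset.card_erase_of_mem heA] at hb
  omega

private lemma not_reachable_erase_of_path [Fintype V] [DecidableEq V] {A : Finset (Sym2 V)}
    (hconn : (fromEdgeSet (↑A : Set (Sym2 V))).Connected)
    (hcard : A.card = Fintype.card V - 1) {x y : V}
    (P : (fromEdgeSet (↑A : Set (Sym2 V))).Walk x y) (hP : P.IsPath)
    {e : Sym2 V} (he : e ∈ P.edges) :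
    ¬ (fromEdgeSet (↑(A.erase e) : Set (Sym2 V))).Reachable x y := by
  intro hr
  obtain ⟨q0⟩ := hr
  have htree := isTree_of_card hconn hcard
  have hle : fromEdgeSet (↑(A.erase e) : Set (Sym2 V)) ≤ fromEdgeSet (↑A : Set (Sym2 V)) :=
    fromEdgeSet_mono (by intro g hg; exact Finset.mem_coe.2 (Finset.mem_of_mem_erase (Finset.mem_coe.1 hg)))
  set Q := q0.toPath with hQ
  have hsub : ∀ g ∈ (Q : (fromEdgeSet (↑(A.erase e) : Set (Sym2 V))).Walk x y).edges,
      g ∈ (fromEdgeSet (↑A : Set (Sym2 V))).edgeSet := by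
    intro g hg
    exact SimpleGraph.edgeSet_mono hle (SimpleGraph.Walk.edges_subset_edgeSet _ hg)
  have hQP : ((Q : (fromEdgeSet (↑(A.erase e) : Set (Sym2 V))).Walk x y).transfer _ hsub).IsPath := Q.2.transfer hsub
  obtain ⟨pp, _, hup⟩ := htree.existsUnique_path x y
  have h1 : P = pp := hup P hP
  have h2 : (Q : (fromEdgeSet (↑(A.erase e) : Set (Sym2 V))).Walk x y).transfer _ hsub = pp := hup _ hQP
  have he' : e ∈ ((Q : (fromEdgeSet (↑(A.erase e) : Set (Sym2 V))).Walk x y).transfer _ hsub).edges := by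
    rw [h2, ← h1]; exact he
  rw [SimpleGraph.Walk.edges_transfer] at he'
  have := SimpleGraph.Walk.edges_subset_edgeSet _ he'
  rw [edgeSet_fromEdgeSet] at this
  have : e ∈ A.erase e := by simpa using this.1
  simp at this

private lemma not_reachable_erase_self [Fintype V] [DecidableEq V] {A : Finset (Sym2 V)}
    (hconn : (fromEdgeSet (↑A : Set (Sym2 V))).Connected)
    (hcard : A.card = Fintype.card V - 1) {x y : V} (hxy : x ≠ y) (he : s(x, y) ∈ A) :
    ¬ (fromEdgeSet (↑(A.erase s(x, y)) : Set (Sym2 V))).Reachable x y := by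
  have hadj : (fromEdgeSet (↑A : Set (Sym2 V))).Adj x y :=
    (fromEdgeSet_adj _).2 ⟨Finset.mem_coe.2 he, hxy⟩
  exact not_reachable_erase_of_path hconn hcard (SimpleGraph.Walk.cons hadj SimpleGraph.Walk.nil)
    (by simp [SimpleGraph.Walk.cons_isPath_iff, hxy]) (by simp)

private lemma exists_crossing_edge {H : SimpleGraph V} (R : V → Prop) :
    ∀ {x y : V} (P : H.Walk x y), R x → ¬ R y →
      ∃ a b, s(a, b) ∈ P.edges ∧ R a ∧ ¬ R b := by
  intro x y P
  induction P with
  | nil => intro h1 h2; exact absurd h1 h2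
  | @cons u u' v h q ih =>
    intro h1 h2
    by_cases hR : R u'
    · obtain ⟨a, b, hm, ha, hb⟩ := ih hR h2
      exact ⟨a, b, by simp [hm], ha, hb⟩
    · exact ⟨u, u', by simp, h1, hR⟩

private lemma connected_swap [DecidableEq V] {A : Finset (Sym2 V)}
    (hconn : (fromEdgeSet (↑A : Set (Sym2 V))).Connected) {a b : V}
    {x y : V} (hxy : x ≠ y)
    (hsep : ¬ (fromEdgeSet (↑(A.erase s(a, b)) : Set (Sym2 V))).Reachable x y) :
    (fromEdgeSet (↑(insert s(x, y) (A.erase s(a, b))) : Set (Sym2 V))).Connected := by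
  set H' := fromEdgeSet (↑(A.erase s(a, b)) : Set (Sym2 V)) with hH'
  set H'' := fromEdgeSet (↑(insert s(x, y) (A.erase s(a, b))) : Set (Sym2 V)) with hH''
  have hle : H' ≤ H'' := fromEdgeSet_mono (by
    intro g hg; exact Finset.mem_coe.2 (Finset.mem_insert_of_mem (Finset.mem_coe.1 hg)))
  have hdi : ∀ w, H'.Reachable w a ∨ H'.Reachable w b :=
    fun w => reach_dichotomy hconn.preconnected w
  have hxyadj : H''.Adj x y := (fromEdgeSet_adj _).2 ⟨by simp, hxy⟩
  have key : ∀ w, H'.Reachable w x ∨ H'.Reachable w y := by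
    intro w
    rcases hdi x with hx | hx <;> rcases hdi y with hy | hy
    · exact absurd (hx.trans hy.symm) hsep
    · rcases hdi w with hw | hw
      · exact Or.inl (hw.trans hx.symm)
      · exact Or.inr (hw.trans hy.symm)
    · rcases hdi w with hw | hw
      · exact Or.inr (hw.trans hy.symm)
      · exact Or.inl (hw.trans hx.symm)
    · exact absurd (hx.trans hy.symm) hsep
  rw [connected_iff]
  refine ⟨?_, hconn.nonempty⟩
  intro w1 w2
  have hx2 : ∀ w, H''.Reachable w x := by
    intro w
    rcases key w with h | h
    · exact h.mono hle
    · exact (h.mono hle).trans hxyadj.symm.reachable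
  exact (hx2 w1).trans (hx2 w2).symm

private lemma spanning_swap [Fintype V] [DecidableEq V] {G : SimpleGraph V} {A : Finset (Sym2 V)}
    (hA : IsSpanningTree G A) {e f : Sym2 V} (he : e ∈ A) (hf : f ∉ A) (hfG : f ∈ G.edgeSet)
    (hconn : (fromEdgeSet (↑(insert f (A.erase e)) : Set (Sym2 V))).Connected) :
    IsSpanningTree G (insert f (A.erase e)) := by
  refine ⟨?_, hconn, ?_⟩
  · intro g hg
    rcases Finset.mem_insert.1 (Finset.mem_coe.1 hg) with rfl | hg'
    · exact hfG
    · exact hA.1 (Finset.mem_coe.2 (Finset.mem_of_mem_erase hg'))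
  · rw [Finset.card_insert_of_notMem (fun hh => hf (Finset.mem_of_mem_erase hh)),
      Finset.card_erase_of_mem he]
    have h1 : 1 ≤ A.card := Finset.card_pos.2 ⟨e, he⟩
    have h2 := hA.2.2
    omega

private lemma exists_symm_exchange [Fintype V] [DecidableEq V] {G : SimpleGraph V}
    {A B : Finset (Sym2 V)} (hA : IsSpanningTree G A) (hB : IsSpanningTree G B)
    {f : Sym2 V} (hfB : f ∈ B) (hfA : f ∉ A) :
    ∃ e ∈ A, e ∉ B ∧ IsSpanningTree G (insert f (A.erase e)) ∧
      IsSpanningTree G (insert e (B.erase f)) := by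
  obtain ⟨x, y, rfl⟩ := sym2_decomp f
  have hxy : x ≠ y := by
    have hG : s(x, y) ∈ G.edgeSet := hB.1 (Finset.mem_coe.2 hfB)
    intro h
    exact G.not_isDiag_of_mem_edgeSet hG (by simp [h])
  have hsepB : ¬ (fromEdgeSet (↑(B.erase s(x, y)) : Set (Sym2 V))).Reachable x y :=
    not_reachable_erase_self hB.2.1 hB.2.2 hxy hfB
  obtain ⟨p0⟩ := hA.2.1.preconnected x y
  set P := p0.toPath with hP
  obtain ⟨a, b, hmem, hRa, hRb⟩ := exists_crossing_edge
    (fun w => (fromEdgeSet (↑(B.erase s(x, y)) : Set (Sym2 V))).Reachable x w)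
    (P : (fromEdgeSet (↑A : Set (Sym2 V))).Walk x y) (Reachable.refl x) (fun h => hsepB h)
  have heEdge : s(a, b) ∈ (fromEdgeSet (↑A : Set (Sym2 V))).edgeSet :=
    SimpleGraph.Walk.edges_subset_edgeSet _ hmem
  rw [edgeSet_fromEdgeSet] at heEdge
  have heA : s(a, b) ∈ A := Finset.mem_coe.1 heEdge.1
  have hab : a ≠ b := by
    intro h
    exact heEdge.2 (by simp [h])
  have heB : s(a, b) ∉ B := by
    intro hmem2
    have hne : s(a, b) ≠ s(x, y) := fun hh => hfA (hh ▸ heA)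
    have hadj : (fromEdgeSet (↑(B.erase s(x, y)) : Set (Sym2 V))).Adj a b :=
      (fromEdgeSet_adj _).2 ⟨Finset.mem_coe.2 (Finset.mem_erase.2 ⟨hne, hmem2⟩), hab⟩
    exact hRb (hRa.trans hadj.reachable)
  have hsepA : ¬ (fromEdgeSet (↑(A.erase s(a, b)) : Set (Sym2 V))).Reachable x y :=
    not_reachable_erase_of_path hA.2.1 hA.2.2
      (P : (fromEdgeSet (↑A : Set (Sym2 V))).Walk x y) P.2 hmem
  have hconnU := connected_swap hA.2.1 hxy hsepA
  have hsepB' : ¬ (fromEdgeSet (↑(B.erase s(x, y)) : Set (Sym2 V))).Reachable a b :=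
    fun h => hRb (hRa.trans h)
  have hconnB' := connected_swap hB.2.1 hab hsepB'
  exact ⟨s(a, b), heA, heB,
    spanning_swap hA heA hfA (hB.1 (Finset.mem_coe.2 hfB)) hconnU,
    spanning_swap hB hfB heB (hA.1 (Finset.mem_coe.2 heA)) hconnB'⟩

private lemma exchange_bound [Fintype V] [DecidableEq V] {G : SimpleGraph V}
    (c y : Sym2 V → ℝ) {A : Finset (Sym2 V)} (hA : IsSpanningTree G A) {Z : ℝ} (hZ : 0 ≤ Z)
    (hswap : ∀ e f : Sym2 V, e ∈ A → f ∉ A → (0 < y e ∧ y e < 1) → (0 < y f ∧ y f < 1) →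
      IsSpanningTree G (insert f (A.erase e)) → c e - c f ≤ Z) :
    ∀ (k : ℕ) (B : Finset (Sym2 V)), (A \ B).card = k → IsSpanningTree G B →
      (∀ g ∈ A, g ∉ B → 0 < y g ∧ y g < 1) → (∀ g ∈ B, g ∉ A → 0 < y g ∧ y g < 1) →
      costE c A - costE c B ≤ (k : ℝ) * Z := by
  intro k
  induction k with
  | zero =>
    intro B hcard hB hQA hQB
    have hAB : A = B := by
      apply Finset.eq_of_subset_of_card_le
      · rw [← Finset.sdiff_eq_empty_iff_subset]
        exact Finset.card_eq_zero.1 hcard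
      · rw [hA.2.2, hB.2.2]
    rw [hAB]; simp
  | succ k ih =>
    intro B hcard hB hQA hQB
    have hcards : B.card = A.card := by rw [hA.2.2, hB.2.2]
    have hBAcard : (B \ A).card = k + 1 := by
      rw [Finset.card_sdiff_comm hcards, hcard]
    have hBA : (B \ A).Nonempty := Finset.card_pos.1 (by omega)
    obtain ⟨f, hf⟩ := hBA
    have hfB : f ∈ B := (Finset.mem_sdiff.1 hf).1
    have hfA : f ∉ A := (Finset.mem_sdiff.1 hf).2
    obtain ⟨e, heA, heB, hU, hB'⟩ := exists_symm_exchange hA hB hfB hfA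
    have hQe := hQA e heA heB
    have hQf := hQB f hfB hfA
    have hce := hswap e f heA hfA hQe hQf hU
    have hAB' : A \ (insert e (B.erase f)) = (A \ B).erase e := by
      ext g
      simp only [Finset.mem_sdiff, Finset.mem_insert, Finset.mem_erase]
      constructor
      · rintro ⟨hgA, hg⟩
        push_neg at hg
        exact ⟨hg.1, hgA, hg.2 (fun hh => hfA (hh ▸ hgA))⟩
      · rintro ⟨hge, hgA, hgB⟩
        refine ⟨hgA, ?_⟩
        push_neg
        exact ⟨hge, fun _ => hgB⟩
    have hstep : (A \ (insert e (B.erase f))).card = k := by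
      rw [hAB', Finset.card_erase_of_mem (Finset.mem_sdiff.2 ⟨heA, heB⟩), hcard]
      omega
    have hQB'' : ∀ g ∈ insert e (B.erase f), g ∉ A → 0 < y g ∧ y g < 1 := by
      intro g hg hgA
      rcases Finset.mem_insert.1 hg with rfl | hg'
      · exact absurd heA hgA
      · exact hQB g (Finset.mem_of_mem_erase hg') hgA
    have hQA'' : ∀ g ∈ A, g ∉ insert e (B.erase f) → 0 < y g ∧ y g < 1 := by
      intro g hgA hg
      simp only [Finset.mem_insert, Finset.mem_erase] at hg
      push_neg at hg
      exact hQA g hgA (hg.2 (fun hh => hfA (hh ▸ hgA)))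
    have hIH := ih (insert e (B.erase f)) hstep hB' hQA'' hQB''
    have hcost : costE c (insert e (B.erase f)) = costE c B - c f + c e := by
      rw [costE, costE, Finset.sum_insert (fun h => heB (Finset.mem_of_mem_erase h)),
        Finset.sum_erase_eq_sub hfB]
      ring
    rw [hcost] at hIH
    push_cast
    linarith

end Aux

private lemma prob_eq {α : Type*} [Fintype α] (p : PMF (Finset α))
    (ev : Finset α → Prop) [DecidablePred ev] :
    prob p ev = ∑ T ∈ Finset.univ.filter ev, (p T).toReal := by
  rw [prob]
  congr 1
  exact Finset.filter_congr_decidable ..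

theorem stmt6 [Fintype V] [DecidableEq V]
    (G : SimpleGraph V) (hG : G.Connected)
    (c : Sym2 V → ℝ)
    (y : Sym2 V → ℝ) (hy : y ∈ stPolytope G)
    (p : PMF (Finset (Sym2 V)))
    (hsupp : ∀ T, p T ≠ 0 → IsSpanningTree G T)
    (hmarg : ∀ e : Sym2 V, prob p (fun T => e ∈ T) = y e)
    (Tbar : Finset (Sym2 V) → Finset (Sym2 V))
    (hTbarTree : ∀ T, IsSpanningTree G T → IsSpanningTree G (Tbar T))
    (hTbarDiff : ∀ T, IsSpanningTree G T → (symmDiff (Tbar T) T).card ≤ 2)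
    (hTbarFrac : ∀ T, IsSpanningTree G T →
      ∀ e ∈ symmDiff (Tbar T) T, 0 < y e ∧ y e < 1)
    (hTbarMin : ∀ T, IsSpanningTree G T → ∀ U, IsSpanningTree G U →
      (symmDiff U T).card ≤ 2 → (∀ e ∈ symmDiff U T, 0 < y e ∧ y e < 1) →
      costE c (Tbar T) ≤ costE c U) :
    1 / ((Fintype.card V : ℝ) - 1) ≤
      prob p (fun T => costE c (Tbar T) ≤ dotE c y) := by
  classical
  set n := Fintype.card V with hn
  set μ := dotE c y with hμ
  set ev : Finset (Sym2 V) → Prop := fun T => costE c (Tbar T) ≤ μ with hev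
  have hwsum : ∑ T : Finset (Sym2 V), (p T).toReal = 1 := by
    have h := p.tsum_coe
    rw [tsum_fintype] at h
    have h2 := ENNReal.toReal_sum (s := (Finset.univ : Finset (Finset (Sym2 V))))
      (f := fun T => p T) (fun a _ => p.apply_ne_top a)
    rw [h] at h2
    simpa using h2.symm
  have hprobnn : (0:ℝ) ≤ prob p ev :=
    Finset.sum_nonneg (fun T _ => ENNReal.toReal_nonneg)
  by_cases hn2 : 2 ≤ n
  swap
  · have hle : ((n : ℝ) - 1) ≤ 0 := by
      have h1 : n ≤ 1 := by omega
      have h2 : (n:ℝ) ≤ 1 := by exact_mod_cast h1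
      linarith
    calc 1 / ((n:ℝ) - 1) ≤ 0 := div_nonpos_of_nonneg_of_nonpos zero_le_one hle
    _ ≤ prob p ev := hprobnn
  have hn1R : (1:ℝ) ≤ (n:ℝ) - 1 := by
    have h2 : (2:ℝ) ≤ (n:ℝ) := by exact_mod_cast hn2
    linarith
  have hypos : ∀ T, p T ≠ 0 → ∀ g ∈ T, 0 < y g := by
    intro T hT g hg
    rw [← hmarg g, prob_eq p]
    have hTmem : T ∈ Finset.univ.filter (fun U : Finset (Sym2 V) => g ∈ U) := by
      simp [hg]
    have hwT : 0 < (p T).toReal := ENNReal.toReal_pos hT (p.apply_ne_top T)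
    calc (0:ℝ) < (p T).toReal := hwT
    _ ≤ ∑ U ∈ Finset.univ.filter (fun U : Finset (Sym2 V) => g ∈ U), (p U).toReal :=
        Finset.single_le_sum (fun i _ => ENNReal.toReal_nonneg) hTmem
  have hylt : ∀ T, p T ≠ 0 → ∀ g, g ∉ T → y g < 1 := by
    intro T hT g hg
    rw [← hmarg g, prob_eq p]
    have hwT : 0 < (p T).toReal := ENNReal.toReal_pos hT (p.apply_ne_top T)
    have hsub : Finset.univ.filter (fun U : Finset (Sym2 V) => g ∈ U) ⊆
        Finset.univ.erase T := by
      intro U hU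
      rw [Finset.mem_filter] at hU
      exact Finset.mem_erase.2 ⟨fun hh => hg (hh ▸ hU.2), Finset.mem_univ U⟩
    calc ∑ U ∈ Finset.univ.filter (fun U : Finset (Sym2 V) => g ∈ U), (p U).toReal
        ≤ ∑ U ∈ Finset.univ.erase T, (p U).toReal :=
          Finset.sum_le_sum_of_subset_of_nonneg hsub (fun i _ _ => ENNReal.toReal_nonneg)
    _ = (∑ U : Finset (Sym2 V), (p U).toReal) - (p T).toReal :=
          Finset.sum_erase_eq_sub (Finset.mem_univ T)
    _ = 1 - (p T).toReal := by rw [hwsum]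
    _ < 1 := by linarith
  have hexp : ∑ T : Finset (Sym2 V), (p T).toReal * costE c T = μ := by
    have h1 : ∀ T : Finset (Sym2 V), (p T).toReal * costE c T
        = ∑ e : Sym2 V, (if e ∈ T then (p T).toReal * c e else 0) := by
      intro T
      simp only [costE]
      rw [Finset.mul_sum, Finset.sum_ite_mem, Finset.univ_inter]
    rw [Finset.sum_congr rfl (fun T _ => h1 T), Finset.sum_comm]
    rw [hμ]
    simp only [dotE]
    apply Finset.sum_congr rfl
    intro e _
    rw [← hmarg e]
    simp only [prob]
    rw [Finset.sum_filter, Finset.mul_sum]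
    exact Finset.sum_congr rfl (fun T _ => by by_cases h : e ∈ T <;> simp [h, mul_comm])
  by_cases hgood : ∀ T, p T ≠ 0 → ev T
  · have hone : prob p ev = 1 := by
      have hsplit := Finset.sum_filter_add_sum_filter_not Finset.univ ev
        (fun T => (p T).toReal)
      have hzero : ∑ T ∈ Finset.univ.filter (fun T => ¬ ev T), (p T).toReal = 0 := by
        apply Finset.sum_eq_zero
        intro T hT
        rw [Finset.mem_filter] at hT
        have hp0 : p T = 0 := by
          by_contra hnz
          exact hT.2 (hgood T hnz)
        simp [hp0]
      rw [hzero, add_zero] at hsplit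
      rw [prob, hsplit, hwsum]
    rw [hone, div_le_one (by linarith)]
    linarith
  · push_neg at hgood
    set Bad := Finset.univ.filter (fun T => p T ≠ 0 ∧ ¬ ev T) with hBad
    have hBadne : Bad.Nonempty := by
      obtain ⟨T1, h1, h2⟩ := hgood
      exact ⟨T1, by simp [hBad, h1, h2]⟩
    obtain ⟨T0, hT0mem, hT0min⟩ := Finset.exists_min_image Bad (costE c) hBadne
    have hT0mem' := hT0mem
    rw [hBad, Finset.mem_filter] at hT0mem'
    obtain ⟨-, hT0ne, hT0bad⟩ := hT0mem'
    have hT0tree := hsupp T0 hT0ne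
    have hT0bad' : μ < costE c (Tbar T0) := not_le.1 hT0bad
    set Z := costE c T0 - μ with hZdef
    have hTbarT0 : costE c (Tbar T0) ≤ costE c T0 := by
      have h0 := hTbarMin T0 hT0tree T0 hT0tree
        (by rw [symmDiff_self]; simp)
        (by intro g hg; rw [symmDiff_self] at hg; simp at hg)
      exact h0
    have hZpos : 0 < Z := by rw [hZdef]; linarith
    have hswap : ∀ e f : Sym2 V, e ∈ T0 → f ∉ T0 → (0 < y e ∧ y e < 1) →
        (0 < y f ∧ y f < 1) → IsSpanningTree G (insert f (T0.erase e)) →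
        c e - c f ≤ Z := by
      intro e f he hf hQe hQf hU
      have hef : e ≠ f := fun h => hf (h ▸ he)
      have hsd : symmDiff (insert f (T0.erase e)) T0 = {e, f} := by
        ext g
        rw [Finset.mem_symmDiff]
        simp only [Finset.mem_insert, Finset.mem_erase, Finset.mem_singleton]
        constructor
        · rintro (⟨hgU, hgT⟩ | ⟨hgT, hgU⟩)
          · rcases hgU with rfl | ⟨hne, hgT'⟩
            · exact Or.inr rfl
            · exact absurd hgT' hgT
          · push_neg at hgU
            exact Or.inl (by_contra fun hne => (hgU.2 hne) hgT)
        · rintro (rfl | rfl)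
          · refine Or.inr ⟨he, ?_⟩
            push_neg
            exact ⟨hef, fun h => absurd rfl h⟩
          · exact Or.inl ⟨Or.inl rfl, hf⟩
      have hcard2 : (symmDiff (insert f (T0.erase e)) T0).card ≤ 2 := by
        rw [hsd]
        exact le_trans (Finset.card_insert_le _ _) (by simp)
      have hfrac : ∀ g ∈ symmDiff (insert f (T0.erase e)) T0, 0 < y g ∧ y g < 1 := by
        intro g hg
        rw [hsd] at hg
        rcases Finset.mem_insert.1 hg with rfl | hg'
        · exact hQe
        · rw [Finset.mem_singleton] at hg'
          subst hg'
          exact hQf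
      have hmin := hTbarMin T0 hT0tree _ hU hcard2 hfrac
      have hcostU : costE c (insert f (T0.erase e)) = costE c T0 - c e + c f := by
        simp only [costE]
        rw [Finset.sum_insert (fun h => hf (Finset.mem_of_mem_erase h)),
          Finset.sum_erase_eq_sub he]
        ring
      rw [hcostU] at hmin
      rw [hZdef]
      linarith
    have hbound : ∀ T, p T ≠ 0 → costE c T0 - ((n:ℝ)-1) * Z ≤ costE c T := by
      intro T hT
      have htree := hsupp T hT
      have hd : (T0 \ T).card ≤ n - 1 := by
        calc (T0 \ T).card ≤ T0.card := Finset.card_le_card Finset.sdiff_subset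
        _ = n - 1 := hT0tree.2.2
      have hQ1 : ∀ g ∈ T0, g ∉ T → 0 < y g ∧ y g < 1 :=
        fun g hg hg' => ⟨hypos T0 hT0ne g hg, hylt T hT g hg'⟩
      have hQ2 : ∀ g ∈ T, g ∉ T0 → 0 < y g ∧ y g < 1 :=
        fun g hg hg' => ⟨hypos T hT g hg, hylt T0 hT0ne g hg'⟩
      have hex := exchange_bound c y hT0tree hZpos.le hswap (T0 \ T).card T rfl htree hQ1 hQ2
      have hcast : ((T0 \ T).card : ℝ) ≤ (n:ℝ) - 1 := by
        have h1 : 1 ≤ n := by omega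
        calc ((T0 \ T).card : ℝ) ≤ ((n-1 : ℕ) : ℝ) := by exact_mod_cast hd
        _ = (n:ℝ) - 1 := by
            rw [Nat.cast_sub h1]
            simp
      have hmul : ((T0 \ T).card : ℝ) * Z ≤ ((n:ℝ) - 1) * Z :=
        mul_le_mul_of_nonneg_right hcast hZpos.le
      linarith
    set NotBad := Finset.univ.filter (fun T => ¬ (p T ≠ 0 ∧ ¬ ev T)) with hNotBad
    set q := ∑ T ∈ Bad, (p T).toReal with hq
    have hqsum : q + ∑ T ∈ NotBad, (p T).toReal = 1 := by
      rw [hq, hNotBad, hBad]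
      rw [Finset.sum_filter_add_sum_filter_not]
      exact hwsum
    have hN : ∑ T ∈ NotBad, (p T).toReal = 1 - q := by linarith
    have hlow1 : q * costE c T0 ≤ ∑ T ∈ Bad, (p T).toReal * costE c T := by
      rw [hq, Finset.sum_mul]
      apply Finset.sum_le_sum
      intro T hT
      exact mul_le_mul_of_nonneg_left (hT0min T hT) ENNReal.toReal_nonneg
    have hlow2 : (1 - q) * (costE c T0 - ((n:ℝ)-1) * Z) ≤
        ∑ T ∈ NotBad, (p T).toReal * costE c T := by
      rw [← hN, Finset.sum_mul]
      apply Finset.sum_le_sum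
      intro T hT
      by_cases hpz : p T = 0
      · simp [hpz]
      · exact mul_le_mul_of_nonneg_left (hbound T hpz) ENNReal.toReal_nonneg
    have hsplitμ : (∑ T ∈ Bad, (p T).toReal * costE c T) +
        (∑ T ∈ NotBad, (p T).toReal * costE c T) = μ := by
      rw [hBad, hNotBad, Finset.sum_filter_add_sum_filter_not]
      exact hexp
    have hcomb : q * costE c T0 + (1 - q) * (costE c T0 - ((n:ℝ)-1) * Z) ≤ μ := by
      linarith
    have hC0 : costE c T0 = μ + Z := by rw [hZdef]; ring
    have h1q : 1 ≤ (1 - q) * ((n:ℝ)-1) := by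
      rw [hC0] at hcomb
      nlinarith [hZpos, hcomb]
    have hfinal1 : 1 / ((n:ℝ)-1) ≤ 1 - q := by
      rw [div_le_iff₀ (by linarith : (0:ℝ) < (n:ℝ)-1)]
      linarith
    have hprob : 1 - q ≤ prob p ev := by
      have hsplitN := Finset.sum_filter_add_sum_filter_not NotBad ev
        (fun T => (p T).toReal)
      have hzero : ∑ T ∈ NotBad.filter (fun T => ¬ ev T), (p T).toReal = 0 := by
        apply Finset.sum_eq_zero
        intro T hT
        rw [Finset.mem_filter, hNotBad, Finset.mem_filter] at hT
        have hp0 : p T = 0 := by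
          by_contra hnz
          exact hT.1.2 ⟨hnz, hT.2⟩
        simp [hp0]
      have hsub2 : NotBad.filter ev ⊆ Finset.univ.filter ev :=
        Finset.filter_subset_filter ev (Finset.subset_univ NotBad)
      calc 1 - q = ∑ T ∈ NotBad, (p T).toReal := hN.symm
      _ = ∑ T ∈ NotBad.filter ev, (p T).toReal := by
          rw [← hsplitN, hzero] at *
          linarith [hsplitN]
      _ ≤ prob p ev :=
          Finset.sum_le_sum_of_subset_of_nonneg hsub2 (fun i _ _ => ENNReal.toReal_nonneg)
    linarith
end
end

section
/- Suppose x* is an optimal solution of the Held–Karp relaxation for the connected Q-join problem, T is a spanning tree, y ∈ ℝ^E_{≥0}, and ε > 0, such that: (1) for every narrow cut C of x* (i.e., x*(δ(C)) < 2), either |T ∩ δ(C)| is odd or y(δ(C)) ≥ 1/ε. Then the point z := (x* + ε·y)/2 lies in the dominant of the Q_T-join polytope, i.e., z ≥ 0 and z(δ(C)) ≥ 1 for every Q_T-cut C, where Q_T = odd(T) △ Q. -/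
open scoped Classical

noncomputable section

variable {V : Type*}

/-- The value `x(δ(S))` of a cut: the sum of `x` over the edges of the complete
graph crossing `S`. -/
def cutVal [Fintype V] [DecidableEq V] (x : Sym2 V → ℝ) (S : Finset V) : ℝ :=
  ∑ e ∈ Finset.univ.filter (crossing S), x e

/-- Degree of a vertex with respect to an edge set. -/
def degE (T : Finset (Sym2 V)) (v : V) : ℕ := (T.filter (fun e => v ∈ e)).card

/-- The set of vertices of odd degree with respect to an edge set. -/
def oddVerts [Fintype V] (T : Finset (Sym2 V)) : Finset V :=
  Finset.univ.filter (fun v => Odd (degE T v))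


/-! If `C` is a `Q_T`-cut with `|C ∩ Q|` even, the Held–Karp constraints already give
`x*(δ(C)) ≥ 2`. Otherwise `x*(δ(C)) ≥ 1`, and if `C` is moreover narrow then
`|C ∩ odd(T)|` is even; by the handshake parity `|C ∩ odd(T)| ≡ |T ∩ δ(C)| (mod 2)` the tree
crosses `C` an even number of times, so the hypothesis forces `ε·y(δ(C)) ≥ 1`. -/

section

open Finset

lemma crossing_mk_iff [DecidableEq V] (S : Finset V) (u w : V) :
    crossing S s(u, w) ↔ (u ∈ S ∧ w ∉ S) ∨ (w ∈ S ∧ u ∉ S) := by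
  constructor
  · rintro ⟨a, b, hab, ha, hb⟩
    rcases Sym2.eq_iff.mp hab with ⟨rfl, rfl⟩ | ⟨rfl, rfl⟩
    · exact .inl ⟨ha, hb⟩
    · exact .inr ⟨ha, hb⟩
  · rintro (⟨hu, hw⟩ | ⟨hw, hu⟩)
    · exact ⟨u, w, rfl, hu, hw⟩
    · exact ⟨w, u, Sym2.eq_swap, hw, hu⟩

lemma odd_card_filter_mem_iff_crossing [DecidableEq V] (S : Finset V) {e : Sym2 V}
    (he : ¬ e.IsDiag) : Odd #{v ∈ S | v ∈ e} ↔ crossing S e := by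
  induction e using Sym2.inductionOn with
  | hf u w =>
    have huw : u ≠ w := fun h => he (Sym2.mk_isDiag_iff.mpr h)
    have hfilter : {v ∈ S | v ∈ s(u, w)} = {u, w} ∩ S := by ext; simp [and_comm]
    rw [crossing_mk_iff, hfilter]
    by_cases hu : u ∈ S <;> by_cases hw : w ∈ S <;>
      simp [insert_inter_of_mem, insert_inter_of_notMem, hu, hw, huw]

/-- Parity of a cut: summing the `T`-degrees over `S` counts crossing edges once and
the other edges with an endpoint in `S` twice. -/
lemma odd_card_inter_oddVerts_iff [Fintype V] [DecidableEq V] (S : Finset V)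
    {T : Finset (Sym2 V)} (hT : ∀ e ∈ T, ¬ e.IsDiag) :
    Odd #(S ∩ oddVerts T) ↔ Odd #(cutEdges S T) := by
  have hdeg : ∑ v ∈ S, degE T v = ∑ e ∈ T, #{v ∈ S | v ∈ e} := by
    convert sum_card_bipartiteAbove_eq_sum_card_bipartiteBelow (s := S) (t := T)
      (fun v e => v ∈ e) using 3
    · simp only [degE, bipartiteAbove]
      congr
    · rfl
  have hleft : Odd (∑ v ∈ S, degE T v) ↔ Odd #(S ∩ oddVerts T) := by
    rw [odd_sum_iff_odd_card_odd]
    congr! 2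
    ext v
    simp [oddVerts]
  rw [← hleft, hdeg, odd_sum_iff_odd_card_odd, cutEdges]
  exact Iff.of_eq (congrArg (fun s => Odd #s)
    (filter_congr fun e he => odd_card_filter_mem_iff_crossing S (hT e he)))

lemma cutEdges_univ [Fintype V] [DecidableEq V] (T : Finset (Sym2 V)) :
    cutEdges univ T = ∅ :=
  filter_false_of_mem fun _ _ ⟨_, _, _, _, hv⟩ => hv (mem_univ _)

lemma even_card_oddVerts [Fintype V] [DecidableEq V] {T : Finset (Sym2 V)}
    (hT : ∀ e ∈ T, ¬ e.IsDiag) : Even #(oddVerts T) := by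
  have h := odd_card_inter_oddVerts_iff univ hT
  rw [univ_inter, cutEdges_univ] at h
  simpa using h

lemma IsSpanningTree.not_isDiag [Fintype V] {G : SimpleGraph V} {T : Finset (Sym2 V)}
    (hT : IsSpanningTree G T) {e : Sym2 V} (he : e ∈ T) : ¬ e.IsDiag :=
  G.not_isDiag_of_mem_edgeSet (hT.1 he)

lemma card_symmDiff_add_two_mul_card_inter [DecidableEq V] (s t : Finset V) :
    #(symmDiff s t) + 2 * #(s ∩ t) = #s + #t := by
  have hs := card_sdiff_add_card_inter s t
  have ht := card_sdiff_add_card_inter t s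
  have hst : #(symmDiff s t) = #(s \ t) + #(t \ s) :=
    card_union_of_disjoint disjoint_sdiff_sdiff
  rw [inter_comm t s] at ht
  omega

lemma odd_card_symmDiff_iff [DecidableEq V] (s t : Finset V) :
    Odd #(symmDiff s t) ↔ (Odd #s ↔ Even #t) := by
  rw [← Nat.odd_add, ← card_symmDiff_add_two_mul_card_inter]
  simp [parity_simps]

lemma odd_card_inter_symmDiff_iff [DecidableEq V] (C s t : Finset V) :
    Odd #(C ∩ symmDiff s t) ↔ (Odd #(C ∩ s) ↔ Even #(C ∩ t)) := by
  rw [← odd_card_symmDiff_iff, ← show C ∩ symmDiff s t = symmDiff (C ∩ s) (C ∩ t) from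
    inf_symmDiff_distrib_left C s t]

lemma nonempty_and_ne_univ_of_odd_card_inter [Fintype V] [DecidableEq V] {C s : Finset V}
    (hs : Even #s) (hC : Odd #(C ∩ s)) : C.Nonempty ∧ C ≠ univ := by
  refine ⟨(card_pos.mp hC.pos).mono inter_subset_left, ?_⟩
  rintro rfl
  rw [univ_inter] at hC
  exact Nat.not_even_iff_odd.mpr hC hs

lemma cutVal_nonneg [Fintype V] [DecidableEq V] {y : Sym2 V → ℝ} (hy : ∀ e, 0 ≤ y e)
    (C : Finset V) : 0 ≤ cutVal y C :=
  sum_nonneg fun e _ => hy e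

lemma cutVal_add_mul_div_two [Fintype V] [DecidableEq V] (x y : Sym2 V → ℝ) (c : ℝ)
    (C : Finset V) :
    cutVal (fun e => (x e + c * y e) / 2) C = (cutVal x C + c * cutVal y C) / 2 := by
  simp only [cutVal, mul_sum, ← sum_add_distrib, ← sum_div]

end

theorem stmt12_general [Fintype V] [DecidableEq V]
    (Q : Finset V) (hQeven : Even Q.card)
    (x y : Sym2 V → ℝ) (hx0 : ∀ e, 0 ≤ x e) (hy0 : ∀ e, 0 ≤ y e)
    (hHK2 : ∀ C : Finset V, C.Nonempty → C ≠ Finset.univ →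
      Even (C ∩ Q).card → 2 ≤ cutVal x C)
    (hHK1 : ∀ C : Finset V, Odd (C ∩ Q).card → 1 ≤ cutVal x C)
    (ε : ℝ) (hε : 0 < ε)
    (T : Finset (Sym2 V)) (hT : IsSpanningTree (⊤ : SimpleGraph V) T)
    (hnarrow : ∀ C : Finset V, C.Nonempty → C ≠ Finset.univ → cutVal x C < 2 →
      Odd (cutEdges C T).card ∨ 1 / ε ≤ cutVal y C) :
    (∀ e, 0 ≤ (x e + ε * y e) / 2) ∧
    ∀ C : Finset V, Odd (C ∩ symmDiff (oddVerts T) Q).card →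
      1 ≤ cutVal (fun e => (x e + ε * y e) / 2) C := by
  refine ⟨fun e => div_nonneg (add_nonneg (hx0 e) (mul_nonneg hε.le (hy0 e))) zero_le_two,
    fun C hC => ?_⟩
  have hloopless : ∀ e ∈ T, ¬ e.IsDiag := fun _ => hT.not_isDiag
  have hQT : Even (symmDiff (oddVerts T) Q).card := by
    rw [← Nat.not_odd_iff_even, odd_card_symmDiff_iff]
    simp [even_card_oddVerts hloopless, hQeven]
  obtain ⟨hCne, hCuniv⟩ := nonempty_and_ne_univ_of_odd_card_inter hQT hC
  rw [odd_card_inter_symmDiff_iff] at hC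
  rw [cutVal_add_mul_div_two]
  have hεy : 0 ≤ ε * cutVal y C := mul_nonneg hε.le (cutVal_nonneg hy0 C)
  rcases Nat.even_or_odd (C ∩ Q).card with hCQ | hCQ
  · linarith [hHK2 C hCne hCuniv hCQ]
  have hx1 := hHK1 C hCQ
  by_cases hwide : 2 ≤ cutVal x C
  · linarith
  rcases hnarrow C hCne hCuniv (not_le.mp hwide) with hodd | hy1
  · have hCQ' := hC.mp ((odd_card_inter_oddVerts_iff C hloopless).mpr hodd)
    exact absurd hCQ (Nat.not_odd_iff_even.mpr hCQ')
  · linarith [(div_le_iff₀' hε).mp hy1]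

theorem stmt12 [Fintype V] [DecidableEq V]
    (Q : Finset V) (hQne : Q.Nonempty) (hQeven : Even Q.card)
    (x y : Sym2 V → ℝ) (hx0 : ∀ e, 0 ≤ x e) (hy0 : ∀ e, 0 ≤ y e)
    (hHK2 : ∀ C : Finset V, C.Nonempty → C ≠ Finset.univ →
      Even (C ∩ Q).card → 2 ≤ cutVal x C)
    (hHK1 : ∀ C : Finset V, Odd (C ∩ Q).card → 1 ≤ cutVal x C)
    (ε : ℝ) (hε : 0 < ε)
    (T : Finset (Sym2 V)) (hT : IsSpanningTree (⊤ : SimpleGraph V) T)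
    (hnarrow : ∀ C : Finset V, C.Nonempty → C ≠ Finset.univ → cutVal x C < 2 →
      Odd (cutEdges C T).card ∨ 1 / ε ≤ cutVal y C) :
    (∀ e, 0 ≤ (x e + ε * y e) / 2) ∧
    ∀ C : Finset V, Odd (C ∩ symmDiff (oddVerts T) Q).card →
      1 ≤ cutVal (fun e => (x e + ε * y e) / 2) C :=
  stmt12_general Q hQeven x y hx0 hy0 hHK2 hHK1 ε hε T hT hnarrow
end
end

section
/- For every k ∈ ℤ_{>0}, let H_k be the graph on vertices v_0, …, v_{2^{k−1}} plus vertices w_{i,j} for all pairs i < j with j − i a power of 2, with edges {v_{i−1}, v_i} for all i, and edges {v_i, w_{i,j}}, {w_{i,j}, v_j} for each such pair. Let F be any edge subset of H_k that contains at least one edge incident to each vertex w_{i,j}. Then there exists ℓ ∈ [2^k] such that |F ∩ δ(S_ℓ)| ≥ k, where S_ℓ := {v_i : 2i < ℓ} ∪ {w_{i,j} : i + j < ℓ}. -/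
/-!
Induct on dyadic blocks `[c, c + 2^m]` of the path. The top vertex `w_{c, c+2^m}` of a block has
an edge of `F` going either left to `v_c` or right to `v_{c+2^m}`. In the first case recurse into
the lower half: every cut `S_ℓ` with `2c < ℓ ≤ 2c + 2^m` then also separates `v_c` from
`w_{c, c+2^m}`. In the second case recurse into the upper half, whose cuts `S_ℓ` with
`2c + 2^m < ℓ ≤ 2c + 2^(m+1)` separate `w_{c, c+2^m}` from `v_{c+2^m}`. Either way the edge is new,
as its `w`-vertex lies outside the half, so each level adds one crossing edge.
-/

open scoped Classical

noncomputable section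

/-- Vertices of the graphs `H_k`: path vertices `v i = Sum.inl i` and
auxiliary vertices `w i j = Sum.inr (i, j)`. -/
abbrev HVtx : Type := ℕ ⊕ (ℕ × ℕ)

/-- `m` is a power of two. -/
def IsPow2 (m : ℕ) : Prop := ∃ ℓ : ℕ, m = 2 ^ ℓ

/-- The pair `(i, j)` indexes an auxiliary vertex `w_{i,j}` of `H_k`. -/
def ValidW (k i j : ℕ) : Prop := i < j ∧ j ≤ 2 ^ (k - 1) ∧ IsPow2 (j - i)

/-- The edges of `H_k`: the path edges `{v_{i-1}, v_i}` and, for each valid pair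
`(i, j)`, the edges `{v_i, w_{i,j}}` and `{w_{i,j}, v_j}`. -/
def HkEdge (k : ℕ) (e : Sym2 HVtx) : Prop :=
  (∃ i : ℕ, 1 ≤ i ∧ i ≤ 2 ^ (k - 1) ∧ e = s(Sum.inl (i - 1), Sum.inl i)) ∨
  (∃ i j : ℕ, ValidW k i j ∧
    (e = s(Sum.inl i, Sum.inr (i, j)) ∨ e = s(Sum.inr (i, j), Sum.inl j)))

/-- The cut `S_ℓ = {v_i : 2i < ℓ} ∪ {w_{i,j} : i + j < ℓ}`. -/
def Sset (ℓ : ℕ) : Set HVtx :=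
  {z | (∃ i, z = Sum.inl i ∧ 2 * i < ℓ) ∨ ∃ i j, z = Sum.inr (i, j) ∧ i + j < ℓ}

/-- An edge crosses the cut `S` if it has exactly one endpoint in `S`. -/
def crossingS (S : Set HVtx) (e : Sym2 HVtx) : Prop :=
  ∃ u v, e = s(u, v) ∧ u ∈ S ∧ v ∉ S

open Finset

@[simp]
lemma mem_Sset_inl {i ℓ : ℕ} : (Sum.inl i : HVtx) ∈ Sset ℓ ↔ 2 * i < ℓ := by
  simp [Sset]

@[simp]
lemma mem_Sset_inr {i j ℓ : ℕ} : (Sum.inr (i, j) : HVtx) ∈ Sset ℓ ↔ i + j < ℓ := by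
  simp [Sset]

lemma crossingS_Sset_inl_inr {i j ℓ : ℕ} (h₁ : 2 * i < ℓ) (h₂ : ℓ ≤ i + j) :
    crossingS (Sset ℓ) s(Sum.inl i, Sum.inr (i, j)) :=
  ⟨_, _, rfl, mem_Sset_inl.2 h₁, by simpa using h₂⟩

lemma crossingS_Sset_inr_inl {i j ℓ : ℕ} (h₁ : i + j < ℓ) (h₂ : ℓ ≤ 2 * j) :
    crossingS (Sset ℓ) s(Sum.inr (i, j), Sum.inl j) :=
  ⟨_, _, rfl, mem_Sset_inr.2 h₁, by simpa using h₂⟩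

lemma HkEdge.eq_of_inr_mem {k i j : ℕ} {e : Sym2 HVtx} (he : HkEdge k e)
    (hw : Sum.inr (i, j) ∈ e) :
    e = s(Sum.inl i, Sum.inr (i, j)) ∨ e = s(Sum.inr (i, j), Sum.inl j) := by
  rcases he with ⟨i', -, -, rfl⟩ | ⟨i', j', -, rfl | rfl⟩ <;> simp_all

def crossingWEdges (F : Finset (Sym2 HVtx)) (ℓ c n : ℕ) : Finset (Sym2 HVtx) :=
  (F.filter (crossingS (Sset ℓ))).filter fun e => ∃ i j, c ≤ i ∧ j ≤ c + n ∧ Sum.inr (i, j) ∈ e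

lemma crossingWEdges_mono {F : Finset (Sym2 HVtx)} {ℓ c n c' n' : ℕ} (hc : c ≤ c')
    (hn : c' + n' ≤ c + n) : crossingWEdges F ℓ c' n' ⊆ crossingWEdges F ℓ c n :=
  fun _ he => by
    simp only [crossingWEdges, mem_filter] at he ⊢
    obtain ⟨hcross, i, j, hi, hj, hw⟩ := he
    exact ⟨hcross, i, j, by omega, by omega, hw⟩

lemma card_crossingWEdges_lt {F : Finset (Sym2 HVtx)} {ℓ c n c' n' : ℕ} (hc : c ≤ c')
    (hn : c' + n' ≤ c + n) {e : Sym2 HVtx} (he : e ∈ crossingWEdges F ℓ c n)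
    (he' : e ∉ crossingWEdges F ℓ c' n') :
    #(crossingWEdges F ℓ c' n') < #(crossingWEdges F ℓ c n) :=
  card_lt_card <| (ssubset_iff_of_subset (crossingWEdges_mono hc hn)).2 ⟨e, he, he'⟩

lemma card_crossingWEdges_lt_of_inl_inr_mem {F : Finset (Sym2 HVtx)} {ℓ c d n : ℕ}
    (hF : s(Sum.inl c, Sum.inr (c, c + d)) ∈ F) (hℓc : 2 * c < ℓ) (hℓ : ℓ ≤ 2 * c + d)
    (hn : n < d) : #(crossingWEdges F ℓ c n) < #(crossingWEdges F ℓ c d) := by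
  refine card_crossingWEdges_lt le_rfl (by omega) (e := s(Sum.inl c, Sum.inr (c, c + d))) ?_ ?_
  · simp only [crossingWEdges, mem_filter]
    exact ⟨⟨hF, crossingS_Sset_inl_inr hℓc (by omega)⟩, c, _, le_rfl, le_rfl, by simp⟩
  · intro h
    obtain ⟨-, i, j, -, hj, hw⟩ := mem_filter.1 h
    simp only [Sym2.mem_iff, reduceCtorEq, Sum.inr.injEq, Prod.mk.injEq, false_or] at hw
    omega

lemma card_crossingWEdges_lt_of_inr_inl_mem {F : Finset (Sym2 HVtx)} {ℓ c d c' n : ℕ}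
    (hF : s(Sum.inr (c, c + d), Sum.inl (c + d)) ∈ F) (hℓc : 2 * c + d < ℓ)
    (hℓ : ℓ ≤ 2 * (c + d)) (hc : c < c') (hn : c' + n ≤ c + d) :
    #(crossingWEdges F ℓ c' n) < #(crossingWEdges F ℓ c d) := by
  refine card_crossingWEdges_lt hc.le hn (e := s(Sum.inr (c, c + d), Sum.inl (c + d))) ?_ ?_
  · simp only [crossingWEdges, mem_filter]
    exact ⟨⟨hF, crossingS_Sset_inr_inl (by omega) hℓ⟩, c, _, le_rfl, le_rfl, by simp⟩
  · intro h
    obtain ⟨-, i, j, hi, -, hw⟩ := mem_filter.1 h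
    simp only [Sym2.mem_iff, reduceCtorEq, Sum.inr.injEq, Prod.mk.injEq, or_false] at hw
    omega

lemma exists_cut_of_dyadic_block (F : Finset (Sym2 HVtx)) (m c : ℕ)
    (hF : ∀ i j, c ≤ i → i < j → j ≤ c + 2 ^ m → IsPow2 (j - i) →
      s(Sum.inl i, Sum.inr (i, j)) ∈ F ∨ s(Sum.inr (i, j), Sum.inl j) ∈ F) :
    ∃ ℓ, 2 * c < ℓ ∧ ℓ ≤ 2 * c + 2 ^ (m + 1) ∧ m + 1 ≤ #(crossingWEdges F ℓ c (2 ^ m)) := by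
  induction m generalizing c with
  | zero =>
    rcases hF c (c + 1) le_rfl (by omega) le_rfl ⟨0, by simp⟩ with hl | hr
    · have := card_crossingWEdges_lt_of_inl_inr_mem hl (ℓ := 2 * c + 1) (by omega) (by omega)
        zero_lt_one
      exact ⟨2 * c + 1, by omega, by omega, by rw [pow_zero]; omega⟩
    · have := card_crossingWEdges_lt_of_inr_inl_mem hr (ℓ := 2 * c + 2) (c' := c + 1) (n := 0)
        (by omega) (by omega) (by omega) (by omega)
      exact ⟨2 * c + 2, by omega, by omega, by rw [pow_zero]; omega⟩
  | succ m ih =>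
    have hpow : 2 ^ (m + 1) = 2 ^ m + 2 ^ m := by ring
    have hpos : 0 < 2 ^ m := by positivity
    rcases hF c (c + 2 ^ (m + 1)) le_rfl (by omega) le_rfl ⟨m + 1, by simp⟩ with hl | hr
    · obtain ⟨ℓ, hℓc, hℓ, hcard⟩ := ih c fun i j hi hij hj => hF i j hi hij (by omega)
      exact ⟨ℓ, hℓc, by omega, hcard.trans_lt
        (card_crossingWEdges_lt_of_inl_inr_mem hl hℓc (by omega) (by omega))⟩
    · obtain ⟨ℓ, hℓc, hℓ, hcard⟩ := ih (c + 2 ^ m) fun i j hi hij hj =>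
        hF i j (by omega) hij (by omega)
      exact ⟨ℓ, by omega, by omega, hcard.trans_lt
        (card_crossingWEdges_lt_of_inr_inl_mem hr (by omega) (by omega) (by omega) (by omega))⟩

theorem stmt13 (k : ℕ) (hk : 1 ≤ k)
    (F : Finset (Sym2 HVtx))
    (hFE : ∀ e ∈ F, HkEdge k e)
    (hcover : ∀ i j : ℕ, ValidW k i j → ∃ e ∈ F, (Sum.inr (i, j) : HVtx) ∈ e) :
    ∃ ℓ : ℕ, 1 ≤ ℓ ∧ ℓ ≤ 2 ^ k ∧
      k ≤ (F.filter (crossingS (Sset ℓ))).card := by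
  obtain ⟨ℓ, hℓ₀, hℓ, hcard⟩ := exists_cut_of_dyadic_block F (k - 1) 0 fun i j _ hij hj hp => by
    obtain ⟨e, heF, hw⟩ := hcover i j ⟨hij, by omega, hp⟩
    rcases (hFE e heF).eq_of_inr_mem hw with rfl | rfl
    exacts [.inl heF, .inr heF]
  rw [Nat.sub_add_cancel hk] at hcard hℓ
  exact ⟨ℓ, hℓ₀, by simpa using hℓ, hcard.trans (card_le_card (filter_subset _ _))⟩
end
end

section
/- Let P_F be the combinatorial polytope of a set system (E, F), let F ∈ F, let A_1, …, A_k ∈ F be sets whose characteristic vectors are adjacent to χ^F on P_F, and suppose χ^Q = χ^F + Σ_{i=1}^k λ_i (χ^{A_i} − χ^F) with all λ_i > 0 for some Q ∈ F. Then every A_i satisfies Q ∩ F ⊆ A_i ⊆ Q ∪ F, and consequently |Q △ A_i| < |Q △ F|. -/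
open scoped Classical

noncomputable section

theorem stmt18 {E : Type*} [Fintype E] [DecidableEq E]
    (𝓕 : Set (Finset E)) (F Q : Finset E) (hF : F ∈ 𝓕) (hQ : Q ∈ 𝓕)
    (k : ℕ) (A : Fin k → Finset E)
    (hAmem : ∀ i, A i ∈ 𝓕)
    (hAadj : ∀ i, AdjVerts (combPolytope 𝓕) (chiF F) (chiF (A i)))
    (lam : Fin k → ℝ) (hlam : ∀ i, 0 < lam i)
    (heq : chiF Q = chiF F + ∑ i, lam i • (chiF (A i) - chiF F)) :
    ∀ i, Q ∩ F ⊆ A i ∧ A i ⊆ Q ∪ F ∧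
      (symmDiff Q (A i)).card < (symmDiff Q F).card := by
  have key : ∀ e : E, ∑ j, lam j * (chiF (A j) e - chiF F e) = chiF Q e - chiF F e := by
    intro e
    have h := congrFun heq e
    simp only [Pi.add_apply, Finset.sum_apply, Pi.smul_apply, Pi.sub_apply,
      smul_eq_mul] at h
    linarith
  intro i
  have h1 : Q ∩ F ⊆ A i := by
    intro e he
    rw [Finset.mem_inter] at he
    have hQ1 : chiF Q e = 1 := by simp [chiF, he.1]
    have hF1 : chiF F e = 1 := by simp [chiF, he.2]
    have hsum := key e
    rw [hQ1, hF1, sub_self] at hsum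
    have hterm : ∀ j ∈ Finset.univ, lam j * (chiF (A j) e - 1) ≤ 0 := by
      intro j _
      apply mul_nonpos_of_nonneg_of_nonpos (le_of_lt (hlam j)); unfold chiF; split <;> norm_num
    have hz := (Finset.sum_eq_zero_iff_of_nonpos hterm).mp hsum i (Finset.mem_univ i)
    have hchi : chiF (A i) e = 1 := by
      rcases mul_eq_zero.mp hz with h | h
      · exact absurd h (hlam i).ne'
      · linarith
    by_contra hmem
    simp [chiF, hmem] at hchi
  have h2 : A i ⊆ Q ∪ F := by
    intro e he
    by_contra hmem
    rw [Finset.mem_union] at hmem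
    push_neg at hmem
    have hQ0 : chiF Q e = 0 := by simp [chiF, hmem.1]
    have hF0 : chiF F e = 0 := by simp [chiF, hmem.2]
    have hsum := key e
    rw [hQ0, hF0, sub_self] at hsum
    have hterm : ∀ j ∈ Finset.univ, 0 ≤ lam j * (chiF (A j) e - 0) := by
      intro j _
      apply mul_nonneg (le_of_lt (hlam j)); unfold chiF; split <;> norm_num
    have hz := (Finset.sum_eq_zero_iff_of_nonneg hterm).mp hsum i (Finset.mem_univ i)
    rw [sub_zero] at hz
    have hchi : chiF (A i) e = 0 := by
      rcases mul_eq_zero.mp hz with h | h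
      · exact absurd h (hlam i).ne'
      · linarith
    simp [chiF, he] at hchi
  refine ⟨h1, h2, ?_⟩
  have hAneF : A i ≠ F := by
    intro h
    exact (hAadj i).1 (by rw [h])
  have hsub : symmDiff Q (A i) ⊆ symmDiff Q F := by
    intro e he
    rw [Finset.mem_symmDiff] at he ⊢
    rcases he with ⟨heQ, heA⟩ | ⟨heA, heQ⟩
    · left
      refine ⟨heQ, fun heF => heA (h1 (Finset.mem_inter.mpr ⟨heQ, heF⟩))⟩
    · right
      have := h2 heA
      rw [Finset.mem_union] at this
      exact ⟨this.resolve_left heQ, heQ⟩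
  have hne : symmDiff Q (A i) ≠ symmDiff Q F := by
    intro h
    exact hAneF (symmDiff_right_injective Q h)
  exact Finset.card_lt_card (hsub.ssubset_of_ne hne)
end
end
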